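/- Every O_X-module M on a ringed space X admits a g-pure monomorphism into a g-pure-injective O_X-module, which can be chosen to be a product of skyscraper sheaves of pure-injective modules over the stalk rings. -/

import Mathlib

open TopologicalSpace CategoryTheory

universe u

namespace SheafPurity

/-! ## Purity for modules over a ring (via finite systems of linear equations) -/

/-- A linear map is a pure monomorphism if it is injective and every finite system of
linear equations with constants in `A` that is solvable in `B` is solvable in `A`. -/
def IsPureMono {R : Type u} [Ring R] {A B : Type u} [AddCommGroup A] [Module R A]
    [AddCommGroup B] [Module R B] (f : A →ₗ[R] B) : Prop :=
  Function.Injective f ∧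
    ∀ (m n : ℕ) (G : Matrix (Fin m) (Fin n) R) (a : Fin m → A) (b : Fin n → B),
      (∀ i, (∑ j, G i j • b j) = f (a i)) →
      ∃ a' : Fin n → A, ∀ i, (∑ j, G i j • a' j) = a i

/-- A module is pure-injective if every morphism to it extends along pure monomorphisms. -/
def PureInjectiveModule (R : Type u) [Ring R] (M : Type u) [AddCommGroup M]
    [Module R M] : Prop :=
  ∀ (A B : Type u) [AddCommGroup A] [Module R A] [AddCommGroup B] [Module R B]
    (f : A →ₗ[R] B), IsPureMono f → ∀ g : A →ₗ[R] M, ∃ h : B →ₗ[R] M, h.comp f = g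

/-! ## Sheaves of rings and sheaves of modules on a topological space -/

variable (X : Type u) [TopologicalSpace X]

/-- The sheaf condition for a family of sections with restriction maps: compatible
families of sections over a cover glue uniquely. -/
def IsSheafFamily (F : Opens X → Type u)
    (res : ∀ (U V : Opens X), V ≤ U → F U → F V) : Prop :=
  ∀ (ι : Type u) (U : Opens X) (V : ι → Opens X) (hU : U = iSup V) (s : ∀ i, F (V i)),
    (∀ (i j : ι) (W : Opens X) (hWi : W ≤ V i) (hWj : W ≤ V j),
      res (V i) W hWi (s i) = res (V j) W hWj (s j)) →
    ∃! t : F U, ∀ i, res U (V i) ((le_iSup V i).trans hU.ge) t = s i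

/-- A sheaf of commutative rings on `X`; `X` together with such a sheaf is a ringed space. -/
structure RingSheaf where
  obj : Opens X → Type u
  ring : ∀ U, CommRing (obj U)
  res : ∀ {U V : Opens X}, V ≤ U → obj U →+* obj V
  res_id : ∀ {U : Opens X} (s : obj U), res le_rfl s = s
  res_res : ∀ {U V W : Opens X} (h1 : W ≤ V) (h2 : V ≤ U) (s : obj U),
    res h1 (res h2 s) = res (h1.trans h2) s
  sheaf : IsSheafFamily X obj fun _ _ h s => res h s

attribute [instance] RingSheaf.ring

variable {X}

/-- A sheaf of `O`-modules on the ringed space `(X, O)`. -/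
structure OMod (O : RingSheaf X) where
  obj : Opens X → Type u
  acg : ∀ U, AddCommGroup (obj U)
  mod : ∀ U, Module (O.obj U) (obj U)
  res : ∀ {U V : Opens X}, V ≤ U → obj U →+ obj V
  res_id : ∀ {U : Opens X} (s : obj U), res le_rfl s = s
  res_res : ∀ {U V W : Opens X} (h1 : W ≤ V) (h2 : V ≤ U) (s : obj U),
    res h1 (res h2 s) = res (h1.trans h2) s
  res_smul : ∀ {U V : Opens X} (h : V ≤ U) (r : O.obj U) (m : obj U),
    res h (r • m) = O.res h r • res h m
  sheaf : IsSheafFamily X obj fun _ _ h s => res h s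

attribute [instance] OMod.acg OMod.mod

variable {O : RingSheaf X}

/-- Morphisms of sheaves of `O`-modules. -/
@[ext]
structure Hom (M N : OMod O) where
  app : ∀ U, M.obj U →ₗ[O.obj U] N.obj U
  naturality : ∀ {U V : Opens X} (h : V ≤ U) (m : M.obj U),
    N.res h (app U m) = app V (M.res h m)

instance : Category (OMod O) where
  Hom M N := Hom M N
  id M := ⟨fun _ => LinearMap.id, fun _ _ => rfl⟩
  comp f g := ⟨fun U => (g.app U).comp (f.app U), fun h m => by
    simp only [LinearMap.comp_apply]
    rw [g.naturality, f.naturality]⟩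
  id_comp f := by apply Hom.ext; rfl
  comp_id f := by apply Hom.ext; rfl
  assoc f g h := by apply Hom.ext; rfl

lemma hom_app {M N : OMod O} (f : M ⟶ N) (U : Opens X) : (f : Hom M N).app U = f.app U := rfl

@[simp] lemma comp_app {M N P : OMod O} (f : M ⟶ N) (g : N ⟶ P) (U : Opens X) (m : M.obj U) :
    (f ≫ g).app U m = g.app U (f.app U m) := rfl

@[simp] lemma id_app (M : OMod O) (U : Opens X) (m : M.obj U) :
    (Hom.app (𝟙 M) U) m = m := rfl

end SheafPurity

namespace SheafPurity

variable {X : Type u} [TopologicalSpace X] {O : RingSheaf X}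

/-! ## Stalks -/

/-- An open neighbourhood of `x`. -/
structure Nbhd (x : X) where
  U : Opens X
  mem : x ∈ U

instance (x : X) : Inhabited (Nbhd x) := ⟨⟨⊤, trivial⟩⟩

/-- Intersection of neighbourhoods. -/
def Nbhd.inf {x : X} (N₁ N₂ : Nbhd x) : Nbhd x := ⟨N₁.U ⊓ N₂.U, ⟨N₁.mem, N₂.mem⟩⟩

lemma Nbhd.inf_le_left {x : X} (N₁ N₂ : Nbhd x) : (N₁.inf N₂).U ≤ N₁.U := _root_.inf_le_left
lemma Nbhd.inf_le_right {x : X} (N₁ N₂ : Nbhd x) : (N₁.inf N₂).U ≤ N₂.U := _root_.inf_le_right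

/-- The germ relation. -/
def germRel (M : OMod O) (x : X) :
    (Σ N : Nbhd x, M.obj N.U) → (Σ N : Nbhd x, M.obj N.U) → Prop :=
  fun a b => ∃ (N : Nbhd x) (h₁ : N.U ≤ a.1.U) (h₂ : N.U ≤ b.1.U),
    M.res h₁ a.2 = M.res h₂ b.2

/-- The stalk of a sheaf of modules at a point. -/
def Stalk (M : OMod O) (x : X) : Type u := Quot (germRel M x)

/-- The germ of a section. -/
def germ {M : OMod O} {x : X} (N : Nbhd x) (s : M.obj N.U) : Stalk M x :=
  Quot.mk _ ⟨N, s⟩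

lemma germ_eq {M : OMod O} {x : X} {N₁ N₂ : Nbhd x} {s₁ : M.obj N₁.U} {s₂ : M.obj N₂.U}
    (N : Nbhd x) (h₁ : N.U ≤ N₁.U) (h₂ : N.U ≤ N₂.U)
    (h : M.res h₁ s₁ = M.res h₂ s₂) : germ N₁ s₁ = germ N₂ s₂ :=
  Quot.sound ⟨N, h₁, h₂, h⟩

lemma germ_res {M : OMod O} {x : X} {N₁ N₂ : Nbhd x} (h : N₂.U ≤ N₁.U) (s : M.obj N₁.U) :
    germ N₂ (M.res h s) = germ N₁ s :=
  germ_eq N₂ le_rfl h (by rw [M.res_id])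

lemma germ_surj {M : OMod O} {x : X} (t : Stalk M x) : ∃ (N : Nbhd x) (s : M.obj N.U), t = germ N s := by
  induction t using Quot.ind with
  | _ a => exact ⟨a.1, a.2, rfl⟩

/-- Lift a binary germ-compatible operation to stalks. -/
def lift₂ {M₁ M₂ : OMod O} {x : X} {γ : Sort*}
    (f : ∀ (N₁ : Nbhd x), M₁.obj N₁.U → ∀ (N₂ : Nbhd x), M₂.obj N₂.U → γ)
    (hl : ∀ N₁ s₁ N₁' s₁' N₂ s₂, germRel M₁ x ⟨N₁, s₁⟩ ⟨N₁', s₁'⟩ →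
      f N₁ s₁ N₂ s₂ = f N₁' s₁' N₂ s₂)
    (hr : ∀ N₁ s₁ N₂ s₂ N₂' s₂', germRel M₂ x ⟨N₂, s₂⟩ ⟨N₂', s₂'⟩ →
      f N₁ s₁ N₂ s₂ = f N₁ s₁ N₂' s₂') :
    Stalk M₁ x → Stalk M₂ x → γ :=
  Quot.lift
    (fun a => Quot.lift (fun b => f a.1 a.2 b.1 b.2)
      (fun b b' hb => hr a.1 a.2 b.1 b.2 b'.1 b'.2 hb))
    (fun a a' ha => funext fun t => by
      induction t using Quot.ind with
      | _ b => exact hl a.1 a.2 a'.1 a'.2 b.1 b.2 ha)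

@[simp] lemma lift₂_germ {M₁ M₂ : OMod O} {x : X} {γ : Sort*}
    (f : ∀ (N₁ : Nbhd x), M₁.obj N₁.U → ∀ (N₂ : Nbhd x), M₂.obj N₂.U → γ) (hl hr)
    (N₁ : Nbhd x) (s₁ : M₁.obj N₁.U) (N₂ : Nbhd x) (s₂ : M₂.obj N₂.U) :
    lift₂ (γ := γ) f hl hr (germ N₁ s₁) (germ N₂ s₂) = f N₁ s₁ N₂ s₂ := rfl

end SheafPurity

namespace SheafPurity

variable {X : Type u} [TopologicalSpace X] {O : RingSheaf X}

protected def Stalk.add {M : OMod O} {x : X} : Stalk M x → Stalk M x → Stalk M x :=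
  lift₂ (fun N₁ s₁ N₂ s₂ => germ (N₁.inf N₂)
      (M.res (N₁.inf_le_left N₂) s₁ + M.res (N₁.inf_le_right N₂) s₂))
    (by
      rintro N₁ s₁ N₁' s₁' N₂ s₂ ⟨W, h₁, h₂, he⟩
      refine germ_eq (W.inf N₂) (show (W.inf N₂).U ≤ (N₁.inf N₂).U from inf_le_inf_right _ h₁)
        (show (W.inf N₂).U ≤ (N₁'.inf N₂).U from inf_le_inf_right _ h₂) ?_
      simp only [map_add, M.res_res]
      congr 1
      rw [← M.res_res (W.inf_le_left N₂) h₁, he, M.res_res])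
    (by
      rintro N₁ s₁ N₂ s₂ N₂' s₂' ⟨W, h₁, h₂, he⟩
      refine germ_eq (N₁.inf W) (show (N₁.inf W).U ≤ (N₁.inf N₂).U from inf_le_inf_left _ h₁)
        (show (N₁.inf W).U ≤ (N₁.inf N₂').U from inf_le_inf_left _ h₂) ?_
      simp only [map_add, M.res_res]
      congr 1
      rw [← M.res_res (N₁.inf_le_right W) h₁, he, M.res_res])

protected def Stalk.neg {M : OMod O} {x : X} : Stalk M x → Stalk M x :=
  Quot.lift (fun a => germ a.1 (-a.2)) (by
    rintro a b ⟨W, h₁, h₂, he⟩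
    exact germ_eq W h₁ h₂ (by simp only [map_neg, he]))

@[simp] lemma add_germ {M : OMod O} {x : X} (N₁ N₂ : Nbhd x) (s₁ : M.obj N₁.U)
    (s₂ : M.obj N₂.U) : Stalk.add (germ N₁ s₁) (germ N₂ s₂) =
      germ (N₁.inf N₂) (M.res (N₁.inf_le_left N₂) s₁ + M.res (N₁.inf_le_right N₂) s₂) := rfl

@[simp] lemma neg_germ {M : OMod O} {x : X} (N : Nbhd x) (s : M.obj N.U) :
    Stalk.neg (germ N s) = germ N (-s) := rfl


section AddGroup
variable {M : OMod O} {x : X}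

set_option maxHeartbeats 1000000 in
lemma stalk_add_assoc (a b c : Stalk M x) :
    Stalk.add (Stalk.add a b) c = Stalk.add a (Stalk.add b c) := by
  obtain ⟨N₁, s₁, rfl⟩ := germ_surj a
  obtain ⟨N₂, s₂, rfl⟩ := germ_surj b
  obtain ⟨N₃, s₃, rfl⟩ := germ_surj c
  simp only [add_germ]
  refine germ_eq ((N₁.inf N₂).inf N₃) le_rfl (le_of_eq (inf_assoc _ _ _)) ?_
  simp only [map_add, M.res_res, add_assoc]

lemma stalk_zero_add (a : Stalk M x) :
    Stalk.add (germ (default : Nbhd x) 0) a = a := by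
  obtain ⟨N, s, rfl⟩ := germ_surj a
  simp only [add_germ]
  refine germ_eq ((default : Nbhd x).inf N) le_rfl (Nbhd.inf_le_right _ _) ?_
  simp only [map_add, map_zero, M.res_res, zero_add]

lemma stalk_add_zero (a : Stalk M x) :
    Stalk.add a (germ (default : Nbhd x) 0) = a := by
  obtain ⟨N, s, rfl⟩ := germ_surj a
  simp only [add_germ]
  refine germ_eq (N.inf (default : Nbhd x)) le_rfl (Nbhd.inf_le_left _ _) ?_
  simp only [map_add, map_zero, M.res_res, add_zero]

lemma stalk_add_comm (a b : Stalk M x) : Stalk.add a b = Stalk.add b a := by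
  obtain ⟨N₁, s₁, rfl⟩ := germ_surj a
  obtain ⟨N₂, s₂, rfl⟩ := germ_surj b
  simp only [add_germ]
  refine germ_eq (N₁.inf N₂) le_rfl (le_of_eq (inf_comm _ _)) ?_
  simp only [map_add, M.res_res, add_comm]

lemma stalk_neg_add_cancel (a : Stalk M x) :
    Stalk.add (Stalk.neg a) a = germ (default : Nbhd x) 0 := by
  obtain ⟨N, s, rfl⟩ := germ_surj a
  simp only [neg_germ, add_germ]
  refine germ_eq (N.inf N) le_rfl le_top ?_
  simp only [map_add, map_neg, map_zero, neg_add_cancel]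

instance : Add (Stalk M x) := ⟨Stalk.add⟩
instance : Neg (Stalk M x) := ⟨Stalk.neg⟩
instance : Zero (Stalk M x) := ⟨germ (default : Nbhd x) 0⟩

instance : AddCommGroup (Stalk M x) where
  add := (· + ·)
  neg := Neg.neg
  zero := 0
  add_assoc := stalk_add_assoc
  zero_add := stalk_zero_add
  add_zero := stalk_add_zero
  add_comm := stalk_add_comm
  neg_add_cancel := stalk_neg_add_cancel
  nsmul := nsmulRec
  nsmul_zero := fun _ => rfl
  nsmul_succ := fun _ _ => rfl
  zsmul := zsmulRec
  zsmul_zero' := fun _ => rfl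
  zsmul_succ' := fun _ _ => rfl
  zsmul_neg' := fun _ _ => rfl

end AddGroup

@[simp] lemma germ_add {M : OMod O} {x : X} (N : Nbhd x) (s t : M.obj N.U) :
    (germ N (s + t) : Stalk M x) = germ N s + germ N t := by
  show _ = Stalk.add _ _
  simp only [add_germ]
  exact germ_eq (N.inf N) (Nbhd.inf_le_left _ _) le_rfl (by simp [map_add, M.res_res])

@[simp] lemma germ_zero {M : OMod O} {x : X} (N : Nbhd x) :
    (germ N (0 : M.obj N.U) : Stalk M x) = 0 := by
  show _ = germ (default : Nbhd x) 0
  exact germ_eq N le_rfl le_top (by simp)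

end SheafPurity

namespace SheafPurity

variable {X : Type u} [TopologicalSpace X] {O : RingSheaf X}

section MoreStalk
variable {M : OMod O} {x : X}

@[simp] lemma add_germ' (N₁ N₂ : Nbhd x) (s₁ : M.obj N₁.U) (s₂ : M.obj N₂.U) :
    germ N₁ s₁ + germ N₂ s₂ =
      germ (N₁.inf N₂) (M.res (N₁.inf_le_left N₂) s₁ + M.res (N₁.inf_le_right N₂) s₂) := rfl

@[simp] lemma neg_germ' (N : Nbhd x) (s : M.obj N.U) :
    -(germ N s) = germ N (-s) := rfl

lemma zero_def : (0 : Stalk M x) = germ (default : Nbhd x) 0 := rfl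

end MoreStalk

/-- A sheaf of rings, regarded as a sheaf of modules over itself. -/
@[reducible] def RingSheaf.toOMod (O : RingSheaf X) : OMod O where
  obj := O.obj
  acg U := inferInstance
  mod U := inferInstance
  res h := (O.res h).toAddMonoidHom
  res_id := O.res_id
  res_res := O.res_res
  res_smul h r m := by simpa [smul_eq_mul] using map_mul (O.res h) r m
  sheaf := O.sheaf

/-- The stalk of the structure sheaf at a point. -/
abbrev RStalk (O : RingSheaf X) (x : X) : Type u := Stalk O.toOMod x

section RingStalk

variable {x : X}

@[simp] lemma rh_apply {α β : Type u} [NonAssocSemiring α] [NonAssocSemiring β]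
    (f : α →+* β) (a : α) : f.toAddMonoidHom a = f a := rfl

@[simp] lemma toOMod_res {U V : Opens X} (h : V ≤ U) (s : O.obj U) :
    O.toOMod.res h s = O.res h s := rfl

protected def RStalk.mul : RStalk O x → RStalk O x → RStalk O x :=
  lift₂ (fun N₁ s₁ N₂ s₂ => germ (N₁.inf N₂)
      (O.res (N₁.inf_le_left N₂) s₁ * O.res (N₁.inf_le_right N₂) s₂))
    (by
      rintro N₁ s₁ N₁' s₁' N₂ s₂ ⟨W, h₁, h₂, he⟩
      refine germ_eq (W.inf N₂) (show (W.inf N₂).U ≤ (N₁.inf N₂).U from inf_le_inf_right _ h₁)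
        (show (W.inf N₂).U ≤ (N₁'.inf N₂).U from inf_le_inf_right _ h₂) ?_
      have he' : O.res h₁ s₁ = O.res h₂ s₁' := he
      show O.res _ _ = O.res _ _
      simp only [map_mul, O.res_res]
      congr 1
      rw [← O.res_res (W.inf_le_left N₂) h₁, he', O.res_res])
    (by
      rintro N₁ s₁ N₂ s₂ N₂' s₂' ⟨W, h₁, h₂, he⟩
      refine germ_eq (N₁.inf W) (show (N₁.inf W).U ≤ (N₁.inf N₂).U from inf_le_inf_left _ h₁)
        (show (N₁.inf W).U ≤ (N₁.inf N₂').U from inf_le_inf_left _ h₂) ?_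
      have he' : O.res h₁ s₂ = O.res h₂ s₂' := he
      show O.res _ _ = O.res _ _
      simp only [map_mul, O.res_res]
      congr 1
      rw [← O.res_res (N₁.inf_le_right W) h₁, he', O.res_res])

instance : Mul (RStalk O x) := ⟨RStalk.mul⟩
instance : One (RStalk O x) := ⟨germ (M := O.toOMod) (default : Nbhd x) 1⟩

@[simp] lemma mul_germ (N₁ N₂ : Nbhd x) (s₁ : O.obj N₁.U) (s₂ : O.obj N₂.U) :
    (germ (M := O.toOMod) N₁ s₁) * (germ (M := O.toOMod) N₂ s₂) =
      germ (N₁.inf N₂) (O.res (N₁.inf_le_left N₂) s₁ * O.res (N₁.inf_le_right N₂) s₂) := rfl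

lemma one_def : (1 : RStalk O x) = germ (M := O.toOMod) (default : Nbhd x) 1 := rfl


section RingAx
variable {x : X}

lemma r_mul_assoc (a b c : RStalk O x) : a * b * c = a * (b * c) := by
  obtain ⟨N₁, s₁, rfl⟩ := germ_surj a
  obtain ⟨N₂, s₂, rfl⟩ := germ_surj b
  obtain ⟨N₃, s₃, rfl⟩ := germ_surj c
  simp only [mul_germ]
  refine germ_eq ((N₁.inf N₂).inf N₃) le_rfl (le_of_eq (inf_assoc _ _ _)) ?_
  simp only [rh_apply, map_mul, O.res_res, mul_assoc]

lemma r_one_mul (a : RStalk O x) : 1 * a = a := by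
  obtain ⟨N, s, rfl⟩ := germ_surj a
  rw [one_def]
  simp only [mul_germ]
  refine germ_eq ((default : Nbhd x).inf N) le_rfl (Nbhd.inf_le_right _ _) ?_
  simp only [rh_apply, map_mul, map_one, O.res_res, one_mul]

lemma r_mul_comm (a b : RStalk O x) : a * b = b * a := by
  obtain ⟨N₁, s₁, rfl⟩ := germ_surj a
  obtain ⟨N₂, s₂, rfl⟩ := germ_surj b
  simp only [mul_germ]
  refine germ_eq (N₁.inf N₂) le_rfl (le_of_eq (inf_comm _ _)) ?_
  simp only [rh_apply, map_mul, O.res_res, mul_comm]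

lemma r_mul_one (a : RStalk O x) : a * 1 = a := by
  rw [r_mul_comm, r_one_mul]

lemma r_left_distrib (a b c : RStalk O x) : a * (b + c) = a * b + a * c := by
  obtain ⟨N₁, s₁, rfl⟩ := germ_surj a
  obtain ⟨N₂, s₂, rfl⟩ := germ_surj b
  obtain ⟨N₃, s₃, rfl⟩ := germ_surj c
  simp only [add_germ' (M := O.toOMod), mul_germ]
  refine germ_eq (N₁.inf (N₂.inf N₃)) le_rfl
    (by exact (le_inf (inf_le_inf_left _ (Nbhd.inf_le_left _ _))
      (inf_le_inf_left _ (Nbhd.inf_le_right _ _)))) ?_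
  simp only [rh_apply, map_mul, map_add, O.res_res, mul_add]
  repeat erw [O.res_res]

lemma r_right_distrib (a b c : RStalk O x) : (a + b) * c = a * c + b * c := by
  rw [r_mul_comm, r_left_distrib, r_mul_comm c a, r_mul_comm c b]

lemma r_zero_mul (a : RStalk O x) : 0 * a = 0 := by
  obtain ⟨N, s, rfl⟩ := germ_surj a
  rw [zero_def]
  simp only [mul_germ]
  refine germ_eq ((default : Nbhd x).inf N) le_rfl le_top ?_
  simp only [rh_apply, map_mul, map_zero, zero_mul]

lemma r_mul_zero (a : RStalk O x) : a * 0 = 0 := by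
  rw [r_mul_comm, r_zero_mul]

instance : CommRing (RStalk O x) where
  __ := (inferInstance : AddCommGroup (Stalk (O.toOMod) x))
  mul := (· * ·)
  one := 1
  mul_assoc := r_mul_assoc
  one_mul := r_one_mul
  mul_one := r_mul_one
  mul_comm := r_mul_comm
  left_distrib := r_left_distrib
  right_distrib := r_right_distrib
  zero_mul := r_zero_mul
  mul_zero := r_mul_zero

end RingAx

/-- The germ map for the structure sheaf, as a ring homomorphism. -/
def RingSheaf.germHom (O : RingSheaf X) {x : X} (N : Nbhd x) : O.obj N.U →+* RStalk O x where
  toFun s := germ (M := O.toOMod) N s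
  map_one' := by
    rw [one_def]
    exact germ_eq N le_rfl le_top (by simp only [rh_apply, map_one])
  map_mul' r s := by
    show germ (M := O.toOMod) N (r * s) = germ (M := O.toOMod) N r * germ (M := O.toOMod) N s
    rw [mul_germ]
    exact germ_eq (N.inf N) (Nbhd.inf_le_left _ _) le_rfl
      (by simp only [rh_apply, map_mul, O.res_res])
  map_zero' := by
    show germ (M := O.toOMod) N 0 = 0
    exact germ_zero (M := O.toOMod) N
  map_add' r s := by
    show germ (M := O.toOMod) N (r + s) = germ (M := O.toOMod) N r + germ (M := O.toOMod) N s
    exact germ_add (M := O.toOMod) N r s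

@[simp] lemma germHom_apply {x : X} (N : Nbhd x) (s : O.obj N.U) :
    O.germHom N s = germ (M := O.toOMod) N s := rfl

lemma germ_res_ring {x : X} {N₁ N₂ : Nbhd x} (h : N₂.U ≤ N₁.U) (s : O.obj N₁.U) :
    germ (M := O.toOMod) N₂ (O.res h s) = germ (M := O.toOMod) N₁ s :=
  germ_res (M := O.toOMod) h s

end RingStalk

end SheafPurity

namespace SheafPurity

variable {X : Type u} [TopologicalSpace X] {O : RingSheaf X}

section ModuleStalk

variable {M : OMod O} {x : X}

protected def Stalk.smul : RStalk O x → Stalk M x → Stalk M x :=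
  lift₂ (fun N₁ r N₂ s => germ (N₁.inf N₂)
      (O.res (N₁.inf_le_left N₂) r • M.res (N₁.inf_le_right N₂) s))
    (by
      rintro N₁ r N₁' r' N₂ s ⟨W, h₁, h₂, he⟩
      refine germ_eq (W.inf N₂) (show (W.inf N₂).U ≤ (N₁.inf N₂).U from inf_le_inf_right _ h₁)
        (show (W.inf N₂).U ≤ (N₁'.inf N₂).U from inf_le_inf_right _ h₂) ?_
      have he' : O.res h₁ r = O.res h₂ r' := he
      simp only [map_add, M.res_smul, M.res_res, O.res_res]
      congr 1
      rw [← O.res_res (W.inf_le_left N₂) h₁, he', O.res_res])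
    (by
      rintro N₁ r N₂ s N₂' s' ⟨W, h₁, h₂, he⟩
      refine germ_eq (N₁.inf W) (show (N₁.inf W).U ≤ (N₁.inf N₂).U from inf_le_inf_left _ h₁)
        (show (N₁.inf W).U ≤ (N₁.inf N₂').U from inf_le_inf_left _ h₂) ?_
      simp only [M.res_smul, M.res_res, O.res_res]
      congr 1
      rw [← M.res_res (N₁.inf_le_right W) h₁, he, M.res_res])

instance : SMul (RStalk O x) (Stalk M x) := ⟨Stalk.smul⟩

@[simp] lemma smul_germ (N₁ N₂ : Nbhd x) (r : O.obj N₁.U) (s : M.obj N₂.U) :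
    (germ (M := O.toOMod) N₁ r) • (germ N₂ s) =
      germ (N₁.inf N₂) (O.res (N₁.inf_le_left N₂) r • M.res (N₁.inf_le_right N₂) s) := rfl

lemma st_one_smul (a : Stalk M x) : (1 : RStalk O x) • a = a := by
  obtain ⟨N, s, rfl⟩ := germ_surj a
  rw [one_def]
  simp only [smul_germ]
  refine germ_eq ((default : Nbhd x).inf N) le_rfl (Nbhd.inf_le_right _ _) ?_
  simp only [M.res_smul, M.res_res, map_one, one_smul]

lemma st_mul_smul (r t : RStalk O x) (a : Stalk M x) : (r * t) • a = r • t • a := by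
  obtain ⟨N₁, r, rfl⟩ := germ_surj r
  obtain ⟨N₂, t, rfl⟩ := germ_surj t
  obtain ⟨N₃, s, rfl⟩ := germ_surj a
  simp only [mul_germ, smul_germ]
  refine germ_eq ((N₁.inf N₂).inf N₃) le_rfl (le_of_eq (inf_assoc _ _ _)) ?_
  simp only [rh_apply, M.res_smul, M.res_res, O.res_res, map_mul, mul_smul]

lemma st_smul_add (r : RStalk O x) (a b : Stalk M x) : r • (a + b) = r • a + r • b := by
  obtain ⟨N₁, rr, rfl⟩ := germ_surj r
  obtain ⟨N₂, s, rfl⟩ := germ_surj a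
  obtain ⟨N₃, t, rfl⟩ := germ_surj b
  simp only [add_germ', smul_germ]
  refine germ_eq (N₁.inf (N₂.inf N₃)) le_rfl
    (by exact (le_inf (inf_le_inf_left _ (Nbhd.inf_le_left _ _))
      (inf_le_inf_left _ (Nbhd.inf_le_right _ _)))) ?_
  simp only [rh_apply, M.res_smul, M.res_res, O.res_res, map_add, smul_add]
  repeat erw [M.res_smul, M.res_res, O.res_res]

lemma st_smul_zero (r : RStalk O x) : r • (0 : Stalk M x) = 0 := by
  obtain ⟨N, rr, rfl⟩ := germ_surj r
  rw [zero_def]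
  simp only [smul_germ]
  refine germ_eq (N.inf (default : Nbhd x)) le_rfl le_top ?_
  simp only [map_zero, smul_zero]

lemma st_add_smul (r t : RStalk O x) (a : Stalk M x) : (r + t) • a = r • a + t • a := by
  obtain ⟨N₁, rr, rfl⟩ := germ_surj r
  obtain ⟨N₂, tt, rfl⟩ := germ_surj t
  obtain ⟨N₃, s, rfl⟩ := germ_surj a
  simp only [add_germ', smul_germ]
  refine germ_eq ((N₁.inf N₂).inf N₃) le_rfl
    (by exact (le_inf (inf_le_inf_right _ (Nbhd.inf_le_left _ _))
      (inf_le_inf_right _ (Nbhd.inf_le_right _ _)))) ?_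
  simp only [rh_apply, M.res_smul, M.res_res, O.res_res, map_add, add_smul]
  repeat erw [M.res_smul, M.res_res, O.res_res]

lemma st_zero_smul (a : Stalk M x) : (0 : RStalk O x) • a = 0 := by
  obtain ⟨N, s, rfl⟩ := germ_surj a
  rw [zero_def]
  simp only [smul_germ]
  refine germ_eq ((default : Nbhd x).inf N) le_rfl le_top ?_
  simp only [rh_apply, map_zero, zero_smul]

instance : Module (RStalk O x) (Stalk M x) where
  smul := (· • ·)
  one_smul := st_one_smul
  mul_smul := st_mul_smul
  smul_add := st_smul_add
  smul_zero := st_smul_zero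
  add_smul := st_add_smul
  zero_smul := st_zero_smul

lemma germ_smul (N : Nbhd x) (r : O.obj N.U) (s : M.obj N.U) :
    (germ N (r • s) : Stalk M x) = O.germHom N r • germ N s := by
  rw [germHom_apply]
  simp only [smul_germ]
  exact germ_eq (N.inf N) (Nbhd.inf_le_left _ _) le_rfl
    (by simp only [M.res_smul, M.res_res, O.res_res, rh_apply])

end ModuleStalk

/-- The underlying function of the map induced on stalks by a morphism. -/
def stalkMapFun {M N : OMod O} (f : Hom M N) (x : X) : Stalk M x → Stalk N x :=
  Quot.lift (fun a => germ a.1 (f.app _ a.2)) (by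
    rintro a b ⟨W, h₁, h₂, he⟩
    refine germ_eq W h₁ h₂ ?_
    rw [f.naturality, f.naturality, he])

@[simp] lemma stalkMapFun_germ {M N : OMod O} (f : Hom M N) (x : X)
    (Nb : Nbhd x) (s : M.obj Nb.U) :
    stalkMapFun f x (germ Nb s) = germ Nb (f.app Nb.U s) := rfl

/-- The map induced on stalks by a morphism of sheaves of modules, as a linear map
over the stalk of the structure sheaf. -/
def stalkMap {M N : OMod O} (f : M ⟶ N) (x : X) : Stalk M x →ₗ[RStalk O x] Stalk N x where
  toFun := stalkMapFun f x
  map_add' a b := by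
    obtain ⟨N₁, s₁, rfl⟩ := germ_surj a
    obtain ⟨N₂, s₂, rfl⟩ := germ_surj b
    simp only [add_germ', stalkMapFun_germ]
    refine germ_eq (N₁.inf N₂) le_rfl le_rfl ?_
    simp only [map_add, N.res_res, M.res_res, Hom.naturality]
  map_smul' r a := by
    obtain ⟨N₁, rr, rfl⟩ := germ_surj r
    obtain ⟨N₂, s, rfl⟩ := germ_surj a
    simp only [smul_germ, stalkMapFun_germ, RingHom.id_apply]
    refine germ_eq (N₁.inf N₂) le_rfl le_rfl ?_
    simp only [map_smul, N.res_smul, M.res_res, N.res_res, O.res_res, Hom.naturality]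

@[simp] lemma stalkMap_germ {M N : OMod O} (f : M ⟶ N) (x : X) (Nb : Nbhd x) (s : M.obj Nb.U) :
    stalkMap f x (germ Nb s) = germ Nb ((f : Hom M N).app Nb.U s) := rfl

/-! ## Geometric purity -/

/-- A morphism of sheaves of modules is a geometrically pure monomorphism if it is a
monomorphism (i.e. injective on sections) and the induced map on every stalk is a pure
monomorphism of modules over the stalk ring. -/
def IsGPureMono {M N : OMod O} (f : M ⟶ N) : Prop :=
  (∀ U, Function.Injective ((f : Hom M N).app U)) ∧
    ∀ x : X, IsPureMono (stalkMap f x)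

/-- A sheaf of modules is geometrically pure-injective if every morphism to it extends
along every geometrically pure monomorphism. -/
def GPureInjective (P : OMod O) : Prop :=
  ∀ (M N : OMod O) (f : M ⟶ N), IsGPureMono f →
    ∀ φ : M ⟶ P, ∃ ψ : N ⟶ P, f ≫ ψ = φ

end SheafPurity

namespace SheafPurity

variable {X : Type u} [TopologicalSpace X] {O : RingSheaf X}

/-! ## Skyscraper sheaves -/

section Sky

variable (x : X) (A : Type u) [AddCommGroup A] [Module (RStalk O x) A]

/-- The module structure on the sections of the skyscraper sheaf. -/
def skyModule (U : Opens X) : Module (O.obj U) (PLift (x ∈ U) → A) where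
  smul r f := fun h => (O.germHom ⟨U, h.down⟩ r) • f h
  one_smul f := funext fun h => by
    show O.germHom ⟨U, h.down⟩ 1 • f h = f h
    simp
  mul_smul r t f := funext fun h => by
    show O.germHom ⟨U, h.down⟩ (r * t) • f h =
      O.germHom ⟨U, h.down⟩ r • O.germHom ⟨U, h.down⟩ t • f h
    rw [map_mul, mul_smul]
  smul_zero r := funext fun h => by
    show O.germHom ⟨U, h.down⟩ r • (0 : A) = 0
    simp
  smul_add r f g := funext fun h => by
    show O.germHom ⟨U, h.down⟩ r • (f h + g h) =
      O.germHom ⟨U, h.down⟩ r • f h + O.germHom ⟨U, h.down⟩ r • g h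
    rw [smul_add]
  add_smul r t f := funext fun h => by
    show O.germHom ⟨U, h.down⟩ (r + t) • f h =
      O.germHom ⟨U, h.down⟩ r • f h + O.germHom ⟨U, h.down⟩ t • f h
    rw [map_add, add_smul]
  zero_smul f := funext fun h => by
    show O.germHom ⟨U, h.down⟩ 0 • f h = 0
    simp

/-- The skyscraper sheaf at `x` with value the `RStalk O x`-module `A`. -/
def sky : OMod O where
  obj U := PLift (x ∈ U) → A
  acg U := inferInstance
  mod U := skyModule x A U
  res {U V} h :=
    { toFun := fun f hv => f ⟨h hv.down⟩
      map_zero' := rfl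
      map_add' := fun _ _ => rfl }
  res_id _ := rfl
  res_res _ _ _ := rfl
  res_smul {U V} h r f := by
    funext hv
    show O.germHom ⟨U, h hv.down⟩ r • f ⟨h hv.down⟩ =
      O.germHom ⟨V, hv.down⟩ (O.res h r) • f ⟨h hv.down⟩
    rw [show O.germHom (x := x) ⟨V, hv.down⟩ (O.res h r) = O.germHom ⟨U, h hv.down⟩ r from
      germ_res_ring (N₁ := ⟨U, h hv.down⟩) (N₂ := ⟨V, hv.down⟩) h r]
  sheaf := by
    intro ι U V hU s compat
    have mem : ∀ (h : x ∈ U), ∃ i, x ∈ V i := fun h => Opens.mem_iSup.mp (hU ▸ h)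
    refine ⟨fun h => s (mem h.down).choose ⟨(mem h.down).choose_spec⟩,
      fun i => funext fun hv => ?_, ?_⟩
    · have hU' : x ∈ U := ((le_iSup V i).trans hU.ge) hv.down
      exact congrFun (compat (mem hU').choose i (V (mem hU').choose ⊓ V i)
        inf_le_left inf_le_right) ⟨⟨(mem hU').choose_spec, hv.down⟩⟩
    · intro y hy
      funext h
      obtain ⟨i, hi⟩ := mem h.down
      have h1 : y h = s i ⟨hi⟩ := congrFun (hy i) ⟨hi⟩
      have h2 : s (mem h.down).choose ⟨(mem h.down).choose_spec⟩ = s i ⟨hi⟩ :=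
        congrFun (compat _ i (V (mem h.down).choose ⊓ V i) inf_le_left inf_le_right)
          ⟨⟨(mem h.down).choose_spec, hi⟩⟩
      rw [h1, h2]

end Sky

/-- Functoriality of the skyscraper sheaf. -/
def skyMap {x : X} {A B : Type u} [AddCommGroup A] [Module (RStalk O x) A]
    [AddCommGroup B] [Module (RStalk O x) B] (φ : A →ₗ[RStalk O x] B) :
    (sky x A : OMod O) ⟶ (sky x B : OMod O) where
  app U :=
    { toFun := fun f h => φ (f h)
      map_add' := fun f g => funext fun h => by
        show φ (f h + g h) = φ (f h) + φ (g h)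
        rw [map_add]
      map_smul' := fun r f => funext fun h => by
        show φ (O.germHom ⟨U, h.down⟩ r • f h) = O.germHom ⟨U, h.down⟩ r • φ (f h)
        rw [map_smul] }
  naturality _ _ := rfl

/-- The skyscraper sheaf functor. -/
def skyFunctor (O : RingSheaf X) (x : X) : ModuleCat.{u} (RStalk O x) ⥤ OMod O where
  obj A := sky x A
  map φ := skyMap φ.hom
  map_id A := rfl
  map_comp φ ψ := rfl

end SheafPurity

namespace SheafPurity

variable {X : Type u} [TopologicalSpace X] {O : RingSheaf X}

/-! ## Direct image along the inclusion of an open subset -/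

/-- The direct image `ι_{U,*}(M|_U)` of the restriction of `M` to an open set `U`:
its sections over `V` are the sections of `M` over `U ⊓ V`. -/
def pushforwardInto (U : Opens X) (M : OMod O) : OMod O where
  obj V := M.obj (U ⊓ V)
  acg V := inferInstance
  mod V := Module.compHom _ (O.res (inf_le_right : U ⊓ V ≤ V))
  res {V W} h := M.res (inf_le_inf_left U h)
  res_id s := M.res_id s
  res_res h1 h2 s := M.res_res _ _ s
  res_smul {V W} h r m := by
    show M.res (show U ⊓ W ≤ U ⊓ V from inf_le_inf_left U h) (O.res (inf_le_right : U ⊓ V ≤ V) r • m) =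
      O.res (inf_le_right : U ⊓ W ≤ W) (O.res h r) • M.res (show U ⊓ W ≤ U ⊓ V from inf_le_inf_left U h) m
    rw [M.res_smul, O.res_res, O.res_res]
  sheaf := by
    intro ι V₀ V hV s compat
    obtain ⟨t, ht, huniq⟩ := M.sheaf ι (U ⊓ V₀) (fun i => U ⊓ V i)
      (by rw [hV, inf_iSup_eq]) s
      (by
        intro i j W hWi hWj
        have hW : W ≤ U ⊓ (V i ⊓ V j) :=
          le_inf (hWi.trans inf_le_left)
            (le_inf (hWi.trans inf_le_right) (hWj.trans inf_le_right))
        calc M.res hWi (s i)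
            = M.res hW (M.res (inf_le_inf_left U inf_le_left) (s i)) := by
              rw [M.res_res]
          _ = M.res hW (M.res (inf_le_inf_left U inf_le_right) (s j)) :=
              congrArg (M.res hW) (compat i j (V i ⊓ V j) inf_le_left inf_le_right)
          _ = M.res hWj (s j) := by rw [M.res_res])
    exact ⟨t, fun i => ht i, fun y hy => huniq y fun i => hy i⟩

/-- The unit morphism `M ⟶ ι_{U,*}(M|_U)`, given by restriction of sections. -/
def pushforwardUnit (U : Opens X) (M : OMod O) : M ⟶ pushforwardInto U M where
  app V :=
    { toFun := fun m => M.res (inf_le_right : U ⊓ V ≤ V) m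
      map_add' := fun _ _ => map_add _ _ _
      map_smul' := fun r m => by
        show M.res (inf_le_right : U ⊓ V ≤ V) (r • m) = O.res (inf_le_right : U ⊓ V ≤ V) r • M.res (inf_le_right : U ⊓ V ≤ V) m
        rw [M.res_smul] }
  naturality {V W} h m := by
    show M.res _ (M.res _ m) = M.res _ (M.res _ m)
    rw [M.res_res, M.res_res]

/-! ## Binary products -/

/-- The binary product of two sheaves of modules. -/
def prod2 (M N : OMod O) : OMod O where
  obj U := M.obj U × N.obj U
  acg U := inferInstance
  mod U := inferInstance
  res {U V} h := (M.res h).prodMap (N.res h)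
  res_id s := Prod.ext (M.res_id s.1) (N.res_id s.2)
  res_res h1 h2 s := Prod.ext (M.res_res h1 h2 s.1) (N.res_res h1 h2 s.2)
  res_smul h r m := Prod.ext (M.res_smul h r m.1) (N.res_smul h r m.2)
  sheaf := by
    intro ι U V hU s compat
    obtain ⟨t₁, ht₁, hu₁⟩ := M.sheaf ι U V hU (fun i => (s i).1)
      (fun i j W hWi hWj => congrArg Prod.fst (compat i j W hWi hWj))
    obtain ⟨t₂, ht₂, hu₂⟩ := N.sheaf ι U V hU (fun i => (s i).2)
      (fun i j W hWi hWj => congrArg Prod.snd (compat i j W hWi hWj))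
    refine ⟨(t₁, t₂), fun i => ?_, fun y hy => ?_⟩
    · exact Prod.ext (ht₁ i) (ht₂ i)
    · have h₁ : y.1 = t₁ := hu₁ y.1 fun i => congrArg Prod.fst (hy i)
      have h₂ : y.2 = t₂ := hu₂ y.2 fun i => congrArg Prod.snd (hy i)
      exact Prod.ext h₁ h₂

/-- A sheaf of modules is trivial (zero) if all its section modules are trivial. -/
def IsZeroOMod (M : OMod O) : Prop := ∀ U, Subsingleton (M.obj U)

/-- An isomorphism of sheaves of modules. -/
structure OModIso (M N : OMod O) where
  hom : M ⟶ N
  inv : N ⟶ M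
  hom_inv : hom ≫ inv = 𝟙 M
  inv_hom : inv ≫ hom = 𝟙 N

/-- A sheaf of modules is indecomposable if it is nonzero and in any direct sum
decomposition one of the summands is zero. -/
def IndecomposableOMod (M : OMod O) : Prop :=
  (¬ IsZeroOMod M) ∧
    ∀ (A B : OMod O), Nonempty (OModIso M (prod2 A B)) → IsZeroOMod A ∨ IsZeroOMod B

/-- The canonical morphism from `M` to the skyscraper at `x` with value the stalk `M_x`. -/
def toSkyStalk (M : OMod O) (x : X) : M ⟶ (sky x (Stalk M x) : OMod O) where
  app U :=
    { toFun := fun m h => germ ⟨U, h.down⟩ m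
      map_add' := fun m₁ m₂ => funext fun h => germ_add _ _ _
      map_smul' := fun r m => funext fun h => by
        show germ ⟨U, h.down⟩ (r • m) = O.germHom ⟨U, h.down⟩ r • germ ⟨U, h.down⟩ m
        exact germ_smul _ _ _ }
  naturality {U V} h m := by
    funext hv
    show germ ⟨U, h hv.down⟩ m = germ ⟨V, hv.down⟩ (M.res h m)
    exact (germ_res (N₁ := ⟨U, h hv.down⟩) (N₂ := ⟨V, hv.down⟩) h m).symm

end SheafPurity


/-!
Each stalk `M_x` purely embeds into its double character module `M_x⁺⁺`. Character modules
`N⁺` are pure-injective: a pure monomorphism stays injective after tensoring with `N` (by the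
equational criterion for vanishing of tensors), and `Hom(-, N⁺)` is the character dual of
`- ⊗ N`. Through the stalk–skyscraper adjunction these embeddings assemble into
`M ⟶ ∏ₓ x_*(M_x⁺⁺)`; it is injective on sections because sections are determined by their
germs, and pure on the stalk at `x` because composing with the `x`-th projection gives back the
pure embedding of `M_x`. Skyscrapers of pure-injective modules are g-pure-injective by the same
adjunction, and products of g-pure-injectives are g-pure-injective.
-/

namespace SheafPurity

open TensorProduct

section ModuleTheory

variable {R : Type u} [CommRing R] {A B : Type u} [AddCommGroup A] [Module R A]
  [AddCommGroup B] [Module R B] {f : A →ₗ[R] B}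

lemma IsPureMono.of_solvable
    (h : ∀ (m n : ℕ) (G : Matrix (Fin m) (Fin n) R) (a : Fin m → A) (b : Fin n → B),
      (∀ i, (∑ j, G i j • b j) = f (a i)) →
      ∃ a' : Fin n → A, ∀ i, (∑ j, G i j • a' j) = a i) :
    IsPureMono f := by
  refine ⟨(injective_iff_map_eq_zero f).mpr fun a ha => ?_, h⟩
  obtain ⟨_, ha'⟩ := h 1 0 0 (fun _ => a) 0 fun _ => by simp [ha]
  simpa using (ha' 0).symm

lemma IsPureMono.exists_solution (hf : IsPureMono f) {ι κ : Type*} [Fintype ι] [Fintype κ]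
    (G : Matrix ι κ R) (a : ι → A) (b : κ → B) (hb : ∀ i, ∑ j, G i j • b j = f (a i)) :
    ∃ a' : κ → A, ∀ i, ∑ j, G i j • a' j = a i := by
  let eι := (Fintype.equivFin ι).symm
  let eκ := (Fintype.equivFin κ).symm
  obtain ⟨a', ha'⟩ := hf.2 _ _ (fun i j => G (eι i) (eκ j)) (a ∘ eι) (b ∘ eκ) fun i => by
    simpa only [← hb, Function.comp_apply] using eκ.sum_comp fun j => G (eι i) j • b j
  refine ⟨a' ∘ eκ.symm, fun i => ?_⟩
  simpa [← eκ.symm.sum_comp] using ha' (eι.symm i)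

lemma IsPureMono.of_comp {C : Type u} [AddCommGroup C] [Module R C] {g : B →ₗ[R] C}
    (h : IsPureMono (g ∘ₗ f)) : IsPureMono f :=
  IsPureMono.of_solvable fun m n G a b hb =>
    h.2 m n G a (g ∘ b) fun i => by simp [← hb, map_sum, map_smul]

lemma IsPureMono.vanishesTrivially (hf : IsPureMono f) {N : Type*} [AddCommGroup N] [Module R N]
    {ι : Type*} [Fintype ι] {n : ι → N} {a : ι → A}
    (h : VanishesTrivially R n (f ∘ a)) : VanishesTrivially R n a := by
  obtain ⟨k, c, y, hy, hc⟩ := h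
  obtain ⟨a', ha'⟩ := hf.exists_solution (Matrix.of c) a y fun i => (hy i).symm
  exact ⟨k, c, a', fun i => (ha' i).symm, hc⟩

/-- The equational criterion for vanishing needs the left factors to span: pass to a finitely
generated submodule `Q` in which the tensor already vanishes, and pad the family with generators
of `Q` paired with `0`. -/
theorem IsPureMono.lTensor_injective (hf : IsPureMono f) (N : Type u) [AddCommGroup N]
    [Module R N] : Function.Injective (f.lTensor N) := by
  refine (injective_iff_map_eq_zero _).mpr fun t ht => ?_
  obtain ⟨k, n, a, rfl⟩ := TensorProduct.exists_sum_tmul_eq t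
  let P := Submodule.span R (Set.range n)
  let nP : Fin k → P := fun i => ⟨n i, Submodule.subset_span ⟨i, rfl⟩⟩
  have hP : P.subtype.rTensor B (∑ i, nP i ⊗ₜ f (a i)) = P.subtype.rTensor B 0 := by
    simpa [map_sum] using ht
  obtain ⟨Q, hQ, hPQ, hvan⟩ :=
    (Submodule.fg_span (Set.finite_range n)).exists_rTensor_fg_inclusion_eq hP
  have : Module.Finite R Q := Module.Finite.iff_fg.mpr hQ
  obtain ⟨l, g, hg⟩ := Module.Finite.exists_fin (R := R) (M := Q)
  let m : Fin k ⊕ Fin l → Q := Sum.elim (fun i => P.inclusion hPQ (nP i)) g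
  let a' : Fin k ⊕ Fin l → A := Sum.elim a 0
  have hm : Submodule.span R (Set.range m) = ⊤ :=
    top_le_iff.mp (hg ▸ Submodule.span_mono (Set.range_subset_iff.mpr fun j => ⟨.inr j, rfl⟩))
  have hma : ∑ i, m i ⊗ₜ f (a' i) = (0 : Q ⊗[R] B) := by
    simpa [m, a', map_sum] using hvan
  have := sum_tmul_eq_zero_of_vanishesTrivially R
    (hf.vanishesTrivially (vanishesTrivially_of_sum_tmul_eq_zero R hm hma))
  simpa [m, a', map_sum] using congrArg (Q.subtype.rTensor A) this

theorem IsPureMono.rTensor_injective (hf : IsPureMono f) (N : Type u) [AddCommGroup N]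
    [Module R N] : Function.Injective (f.rTensor N) :=
  (f.lTensor_inj_iff_rTensor_inj N).mp (hf.lTensor_injective N)

theorem pureInjectiveModule_characterModule (N : Type u) [AddCommGroup N] [Module R N] :
    PureInjectiveModule R (CharacterModule N) := by
  intro A' B' _ _ _ _ g hg φ
  exact rTensor_injective_iff_lcomp_surjective.mp (hg.rTensor_injective N) φ

lemma characterModule_sum_apply {S : Type u} [AddCommGroup S] {ι : Type*} (s : Finset ι)
    (c : ι → CharacterModule S) (a : S) : (∑ i ∈ s, c i) a = ∑ i ∈ s, c i a :=
  AddMonoidHom.finsetSum_apply _ _ _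

def doubleDual (S : Type u) [AddCommGroup S] [Module R S] :
    S →ₗ[R] CharacterModule (CharacterModule S) where
  toFun s :=
    { toFun := fun c => c s
      map_zero' := rfl
      map_add' := fun _ _ => rfl }
  map_add' s s' := by ext c; exact map_add c s s'
  map_smul' r s := by ext c; rfl

@[simp] lemma doubleDual_apply {S : Type u} [AddCommGroup S] [Module R S]
    (s : S) (c : CharacterModule S) : doubleDual (R := R) S s c = c s := rfl

/-- If `G a' = a` had no solution, a character `χ` of `Sᵐ` killing the image of `G` would be
nonzero at `a`; its components `χᵢ` satisfy `∑ᵢ Gᵢⱼ χᵢ = 0`, so testing `a = G b` against them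
in `S⁺⁺` gives `χ a = 0`. -/
theorem isPureMono_doubleDual (S : Type u) [AddCommGroup S] [Module R S] :
    IsPureMono (doubleDual (R := R) S) := by
  refine IsPureMono.of_solvable fun m n G a b hb => ?_
  let Gmap : (Fin n → S) →ₗ[R] (Fin m → S) :=
    LinearMap.pi fun i => ∑ j, G i j • LinearMap.proj j
  suffices a ∈ LinearMap.range Gmap by
    obtain ⟨a', ha'⟩ := this
    exact ⟨a', fun i => by simpa [Gmap] using congrFun ha' i⟩
  rw [← Submodule.Quotient.mk_eq_zero]
  refine CharacterModule.eq_zero_of_character_apply fun c => ?_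
  let χ : Fin m → CharacterModule S := fun i =>
    c.comp ((LinearMap.range Gmap).mkQ ∘ₗ LinearMap.single R (fun _ => S) i).toAddMonoidHom
  have hχ_apply : ∀ i s, χ i s = c ((LinearMap.range Gmap).mkQ (Pi.single i s)) :=
    fun _ _ => rfl
  have hχ : ∀ j, ∑ i, G i j • χ i = 0 := fun j => by
    ext s
    have hG : ∑ i, Pi.single i (G i j • s) = Gmap (Pi.single j s) := by
      ext k
      simp [Gmap, Pi.single_apply]
    calc (∑ i, G i j • χ i) s = c ((LinearMap.range Gmap).mkQ (Gmap (Pi.single j s))) := by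
          simp only [characterModule_sum_apply, CharacterModule.smul_apply, hχ_apply]
          rw [← map_sum c, ← map_sum, hG]
      _ = 0 := by
          rw [(Submodule.mkQ_apply _ _).trans ((Submodule.Quotient.mk_eq_zero _).mpr
            (LinearMap.mem_range_self Gmap _)), map_zero]
  calc c (Submodule.Quotient.mk a) = ∑ i, χ i (a i) := by
        simp only [hχ_apply]
        rw [← map_sum c, ← map_sum, Finset.univ_sum_single]
        rfl
    _ = ∑ i, ∑ j, b j (G i j • χ i) := by
        simp only [← doubleDual_apply (R := R) (a _), ← hb, characterModule_sum_apply]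
        rfl
    _ = 0 := by
        rw [Finset.sum_comm]
        simp only [← map_sum, hχ, map_zero, Finset.sum_const_zero]

theorem exists_isPureMono_pureInjectiveModule (S : Type u) [AddCommGroup S] [Module R S] :
    ∃ (A : ModuleCat.{u} R) (ι : S →ₗ[R] A), IsPureMono ι ∧ PureInjectiveModule R A :=
  ⟨.of R (CharacterModule (CharacterModule S)), doubleDual S, isPureMono_doubleDual S,
    pureInjectiveModule_characterModule _⟩

end ModuleTheory

variable {X : Type u} [TopologicalSpace X] {O : RingSheaf X}

lemma germRel_equivalence (M : OMod O) (x : X) : Equivalence (germRel M x) where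
  refl s := ⟨s.1, le_rfl, le_rfl, rfl⟩
  symm := fun ⟨W, h₁, h₂, he⟩ => ⟨W, h₂, h₁, he.symm⟩
  trans := fun {s _ t} ⟨W, h₁, h₂, he⟩ ⟨W', h₁', h₂', he'⟩ => by
    refine ⟨W.inf W', (W.inf_le_left W').trans h₁, (W.inf_le_right W').trans h₂', ?_⟩
    rw [← M.res_res (W.inf_le_left W') h₁, he, M.res_res, ← M.res_res (W.inf_le_right W') h₂',
      ← he', M.res_res]

lemma exists_res_eq_zero_of_germ_eq_zero {M : OMod O} {x : X} {N : Nbhd x} {s : M.obj N.U}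
    (h : (germ N s : Stalk M x) = 0) : ∃ (W : Nbhd x) (hW : W.U ≤ N.U), M.res hW s = 0 := by
  obtain ⟨W, h₁, h₂, he⟩ := (germRel_equivalence M x).eqvGen_iff.mp (Quot.eq.mp h)
  exact ⟨W, h₁, by rw [he, map_zero]⟩

lemma eq_zero_of_germ_eq_zero {M : OMod O} {U : Opens X} (s : M.obj U)
    (h : ∀ (x : X) (hx : x ∈ U), (germ ⟨U, hx⟩ s : Stalk M x) = 0) : s = 0 := by
  choose W hW hres using fun p : U => exists_res_eq_zero_of_germ_eq_zero (h p p.2)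
  have hU : U = ⨆ p, (W p).U :=
    le_antisymm (fun z hz => Opens.mem_iSup.mpr ⟨⟨z, hz⟩, (W ⟨z, hz⟩).mem⟩) (iSup_le hW)
  refine (M.sheaf U U (fun p => (W p).U) hU (fun _ => 0) fun _ _ _ _ _ => by
    simp only [map_zero]).unique hres fun _ => map_zero _

section Pi

variable {ι : Type u} (F : ι → OMod O)

def piOMod : OMod O where
  obj U := ∀ i, (F i).obj U
  acg U := inferInstance
  mod U := inferInstance
  res {U V} h :=
    { toFun := fun s i => (F i).res h (s i)
      map_zero' := by funext i; exact map_zero _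
      map_add' := fun s t => by funext i; exact map_add _ _ _ }
  res_id s := by funext i; exact (F i).res_id _
  res_res h1 h2 s := by funext i; exact (F i).res_res _ _ _
  res_smul h r m := by funext i; exact (F i).res_smul h r (m i)
  sheaf := by
    intro κ U V hU s compat
    choose t ht using fun i => (F i).sheaf κ U V hU (fun j => s j i)
      (fun j j' W hWi hWj => congrFun (compat j j' W hWi hWj) i)
    exact ⟨t, fun j => funext fun i => (ht i).1 j,
      fun y hy => funext fun i => (ht i).2 (y i) (fun j => congrFun (hy j) i)⟩

def piProj (i : ι) : piOMod F ⟶ F i where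
  app _ := LinearMap.proj i
  naturality _ _ := rfl

variable {F}

def piLift {Q : OMod O} (q : ∀ i, Q ⟶ F i) : Q ⟶ piOMod F where
  app U := LinearMap.pi fun i => Hom.app (q i) U
  naturality h m := funext fun i => Hom.naturality (q i) h m

@[simp] lemma piLift_comp_piProj {Q : OMod O} (q : ∀ i, Q ⟶ F i) (i : ι) :
    piLift q ≫ piProj F i = q i := rfl

lemma piOMod_hom_ext {Q : OMod O} {g g' : Q ⟶ piOMod F}
    (h : ∀ i, g ≫ piProj F i = g' ≫ piProj F i) : g = g' :=
  Hom.ext <| funext fun U => LinearMap.ext fun m => funext fun i =>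
    congrArg (fun ψ => Hom.app ψ U m) (h i)

lemma existsUnique_comp_piProj {Q : OMod O} (q : ∀ i, Q ⟶ F i) :
    ∃! g : Q ⟶ piOMod F, ∀ i, g ≫ piProj F i = q i :=
  ⟨piLift q, piLift_comp_piProj q, fun _ hg => piOMod_hom_ext fun i => by simp [hg i]⟩

lemma GPureInjective.pi (h : ∀ i, GPureInjective (F i)) : GPureInjective (piOMod F) := by
  intro M N f hf φ
  choose ψ hψ using fun i => h i M N f hf (φ ≫ piProj F i)
  exact ⟨piLift ψ, piOMod_hom_ext fun i => by simp [hψ i]⟩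

end Pi

section SkyAdjunction

variable {x : X} {A : Type u} [AddCommGroup A] [Module (RStalk O x) A]

def skyEval : Stalk (sky x A : OMod O) x →ₗ[RStalk O x] A where
  toFun := Quot.lift (fun s => s.2 ⟨s.1.mem⟩) (by
    rintro s t ⟨W, h₁, h₂, he⟩
    exact congrFun he ⟨W.mem⟩)
  map_add' a b := by
    obtain ⟨N₁, s₁, rfl⟩ := germ_surj a
    obtain ⟨N₂, s₂, rfl⟩ := germ_surj b
    rfl
  map_smul' r a := by
    obtain ⟨N₁, r, rfl⟩ := germ_surj r
    obtain ⟨N₂, s, rfl⟩ := germ_surj a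
    show O.germHom (N₁.inf N₂) (O.res (N₁.inf_le_left N₂) r) • s ⟨_⟩ = O.germHom N₁ r • s ⟨N₂.mem⟩
    rw [germHom_apply, germHom_apply, germ_res_ring]

variable {Q : OMod O}

def skyHomEquiv : (Q ⟶ (sky x A : OMod O)) ≃ (Stalk Q x →ₗ[RStalk O x] A) where
  toFun q := skyEval ∘ₗ stalkMap q x
  invFun ψ := toSkyStalk Q x ≫ skyMap ψ
  left_inv _ := rfl
  right_inv ψ := LinearMap.ext fun t => by
    obtain ⟨N, s, rfl⟩ := germ_surj t
    rfl

lemma skyHomEquiv_comp {Q' : OMod O} (u : Q' ⟶ Q) (q : Q ⟶ (sky x A : OMod O)) :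
    skyHomEquiv (u ≫ q) = skyHomEquiv q ∘ₗ stalkMap u x :=
  LinearMap.ext fun t => by
    obtain ⟨N, s, rfl⟩ := germ_surj t
    rfl

lemma gPureInjective_sky (hA : PureInjectiveModule (RStalk O x) A) :
    GPureInjective (sky x A : OMod O) := by
  intro M N f hf φ
  obtain ⟨η, hη⟩ := hA _ _ (stalkMap f x) (hf.2 x) (skyHomEquiv φ)
  exact ⟨skyHomEquiv.symm η, skyHomEquiv.injective (by rw [skyHomEquiv_comp,
    Equiv.apply_symm_apply, hη])⟩

end SkyAdjunction

lemma isGPureMono_piLift {M : OMod O} {A : X → Type u} [∀ x, AddCommGroup (A x)]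
    [∀ x, Module (RStalk O x) (A x)] (q : ∀ x, M ⟶ (sky x (A x) : OMod O))
    (hq : ∀ x, IsPureMono (skyHomEquiv (q x))) : IsGPureMono (piLift q) := by
  refine ⟨fun U => (injective_iff_map_eq_zero _).mpr fun s hs => ?_, fun x => ?_⟩
  · refine eq_zero_of_germ_eq_zero s fun x hx => (injective_iff_map_eq_zero _).mp (hq x).1 _ ?_
    exact congrFun (congrFun hs x) ⟨hx⟩
  · have hqx := hq x
    rw [← piLift_comp_piProj q x, skyHomEquiv_comp] at hqx
    exact hqx.of_comp

end SheafPurity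

open SheafPurity CategoryTheory in
/-- Every `O_X`-module `M` on a ringed space `X` admits a g-pure
monomorphism into a g-pure-injective `O_X`-module, which can be chosen to be a product
of skyscraper sheaves of pure-injective modules over the stalk rings. -/
theorem exists_gPure_embedding_into_gPureInjective
    {X : Type u} [TopologicalSpace X] (O : RingSheaf X) (M : OMod O) :
    ∃ (P : OMod O) (f : M ⟶ P), IsGPureMono f ∧ GPureInjective P ∧
      ∃ (A : ∀ x : X, ModuleCat.{u} (RStalk O x))
        (p : ∀ x : X, P ⟶ (sky x (A x) : OMod O)),
        (∀ x : X, PureInjectiveModule (RStalk O x) (A x)) ∧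
        ∀ (Q : OMod O) (q : ∀ x : X, Q ⟶ (sky x (A x) : OMod O)),
          ∃! g : Q ⟶ P, ∀ x, g ≫ p x = q x := by
  choose A ι hι hA using fun x : X =>
    exists_isPureMono_pureInjectiveModule (R := RStalk O x) (Stalk M x)
  let q x : M ⟶ (sky x (A x) : OMod O) := skyHomEquiv.symm (ι x)
  refine ⟨piOMod fun x => sky x (A x), piLift q, isGPureMono_piLift q fun x => ?_,
    GPureInjective.pi fun x => gPureInjective_sky (hA x), A, piProj _, hA,
    fun _ => existsUnique_comp_piProj⟩
  simpa [q] using hι x
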